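/- arXiv:2312.09914 — 3 statements merged into one kernel-verified Lean document; each statement's English description precedes it below -/
import Mathlib

section
/- Let (W,+) be a semigroup. Then A_fin(W) ⊆ W_L(u) ∩ W_R(u) for every u ∈ W\A_fin(W). -/
open Pointwise

/-- Principal left ideal W_L(u) = (W + {u}) ∪ {u}. -/
def WLset {W : Type*} [AddSemigroup W] (u : W) : Set W :=
  ((Set.univ : Set W) + ({u} : Set W)) ∪ {u}

/-- Principal right ideal W_R(u) = ({u} + W) ∪ {u}. -/
def WRset {W : Type*} [AddSemigroup W] (u : W) : Set W :=
  (({u} : Set W) + (Set.univ : Set W)) ∪ {u}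

/-- Principal two-sided ideal W(u) = (W_L(u) + W) ∪ W_L(u). -/
def WIset {W : Type*} [AddSemigroup W] (u : W) : Set W :=
  (WLset u + (Set.univ : Set W)) ∪ WLset u

/-- Green L-class. -/
def Lclass {W : Type*} [AddSemigroup W] (u : W) : Set W := {v | WLset u = WLset v}

/-- Green R-class. -/
def Rclass {W : Type*} [AddSemigroup W] (u : W) : Set W := {v | WRset u = WRset v}

/-- Green H-class. -/
def Hclass {W : Type*} [AddSemigroup W] (u : W) : Set W :=
  {v | WLset u = WLset v ∧ WRset u = WRset v}

def IsLeftIdealSG {W : Type*} [AddSemigroup W] (A : Set W) : Prop :=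
  (Set.univ : Set W) + A ⊆ A

def IsRightIdealSG {W : Type*} [AddSemigroup W] (A : Set W) : Prop :=
  A + (Set.univ : Set W) ⊆ A

def IsIdealSG {W : Type*} [AddSemigroup W] (A : Set W) : Prop :=
  IsLeftIdealSG A ∧ IsRightIdealSG A

/-- The set E(W) of idempotents. -/
def Eset (W : Type*) [AddSemigroup W] : Set W := {e | e + e = e}

/-- The Rees order: f ≤_H e iff e + f = f + e = f. -/
def ReesLE {W : Type*} [AddSemigroup W] (f e : W) : Prop := e + f = f ∧ f + e = f

/-- E^≤(e) = {f ∈ E(W) | f ≤_H e}. -/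
def Ele {W : Type*} [AddSemigroup W] (e : W) : Set W := {f ∈ Eset W | ReesLE f e}

/-- E^lin(W): idempotents α such that ≤_H is a total order on E^≤(α). -/
def Elin (W : Type*) [AddSemigroup W] : Set W :=
  {α ∈ Eset W | ∀ f ∈ Ele α, ∀ g ∈ Ele α, ReesLE f g ∨ ReesLE g f}

def Afin (W : Type*) [AddSemigroup W] : Set W :=
  {α ∈ Elin W | (Ele α).Finite ∧ ∀ w ∉ Ele α, w + α = α ∧ α + w = α}

/-- The set A(W) of quasi-absorbing elements. -/
def AW (W : Type*) [AddSemigroup W] : Set W :=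
  {α ∈ Elin W | ∀ w ∉ Ele α, w + α = α ∧ α + w = α}

/-- Ā_n = ⋃_{i=1}^n A_i. -/
def Abar (W : Type*) [AddSemigroup W] : ℕ → Set W
  | 0 => ∅
  | n + 1 => Abar W n ∪ {α | α ∉ Abar W n ∧ ∀ w ∉ Abar W n, w + α = α ∧ α + w = α}

/-- The sets A_n from the stepwise construction. -/
def Astep (W : Type*) [AddSemigroup W] : ℕ → Set W
  | 0 => ∅
  | n + 1 => {α | α ∉ Abar W n ∧ ∀ w ∉ Abar W n, w + α = α ∧ α + w = α}

/-- The set A_s(W) of stepwise quasi-absorbing elements. -/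
def As (W : Type*) [AddSemigroup W] : Set W := {α | ∃ n, α ∈ Astep W n}

/-- The set P(A) of A-primitive idempotents. -/
def Pset {W : Type*} [AddSemigroup W] (A : Set W) : Set W :=
  {e | e ∈ Eset W \ A ∧ ∀ f ∈ Eset W, ReesLE f e → f = e ∨ f ∈ A}

/-- G ⊆ W is a group under +: closed, with a two-sided identity and inverses. -/
def IsGroupOn {W : Type*} [AddSemigroup W] (G : Set W) : Prop :=
  (∀ a ∈ G, ∀ b ∈ G, a + b ∈ G) ∧
  ∃ e ∈ G, (∀ a ∈ G, a + e = a ∧ e + a = a) ∧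
    ∀ a ∈ G, ∃ b ∈ G, a + b = e ∧ b + a = e

/-- D is an A-minimal ideal. -/
def IsMinimalIdealRel {W : Type*} [AddSemigroup W] (A D : Set W) : Prop :=
  IsIdealSG D ∧ ¬ D ⊆ A ∧ ∀ E : Set W, IsIdealSG E → E ⊂ D → E ⊆ A

/-- D is an ideal of the subsemigroup (V,+). -/
def IsIdealIn {W : Type*} [AddSemigroup W] (V D : Set W) : Prop :=
  D ⊆ V ∧ V + D ⊆ D ∧ D + V ⊆ D

/-- The subsemigroup (V,+) is A-simple. -/
def IsSimpleRel {W : Type*} [AddSemigroup W] (V A : Set W) : Prop :=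
  A ⊂ V ∧ ∀ D : Set W, IsIdealIn V D → D = V ∨ D ⊆ A

/-- A bottleneck ideal. -/
def IsBottleneck {W : Type*} [AddSemigroup W] (A : Set W) : Prop :=
  IsIdealSG A ∧ ∀ D : Set W, IsIdealSG D → D ⊆ A ∨ A ⊆ D

theorem ReesLE.trans {W : Type*} [AddSemigroup W] {f e d : W} (hfe : ReesLE f e)
    (hed : ReesLE e d) : ReesLE f d := by
  constructor
  · calc d + f = d + (e + f) := by rw [hfe.1]
      _ = e + f := by rw [← add_assoc, hed.1]
      _ = f := hfe.1
  · calc f + d = f + e + d := by rw [hfe.2]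
      _ = f + e := by rw [add_assoc, hed.2]
      _ = f := hfe.2

theorem Ele_subset_Ele {W : Type*} [AddSemigroup W] {e d : W} (hed : ReesLE e d) :
    Ele e ⊆ Ele d :=
  fun _ ⟨hf, hfe⟩ => ⟨hf, hfe.trans hed⟩

/-- An element `w ∉ E^≤(u)` either lies in the chain `E^≤(α)`, hence above `u`, or absorbs `α`,
hence `u` as well. -/
theorem mem_Afin_of_mem_Ele {W : Type*} [AddSemigroup W] {α u : W} (hα : α ∈ Afin W)
    (hu : u ∈ Ele α) : u ∈ Afin W := by
  obtain ⟨⟨-, hlin⟩, hfin, habs⟩ := hα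
  have hsub : Ele u ⊆ Ele α := Ele_subset_Ele hu.2
  refine ⟨⟨hu.1, fun f hf g hg => hlin f (hsub hf) g (hsub hg)⟩, hfin.subset hsub, ?_⟩
  intro w hw
  by_cases hwα : w ∈ Ele α
  · exact (hlin u hu w hwα).resolve_right fun hwu => hw ⟨hwα.1, hwu⟩
  · exact hu.2.trans (habs w hwα)

theorem Afin_subset_principal {W : Type*} [AddSemigroup W] (u : W) (hu : u ∉ Afin W) :
    Afin W ⊆ WLset u ∩ WRset u := by
  intro α hα
  have huα : u ∉ Ele α := fun h => hu (mem_Afin_of_mem_Ele hα h)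
  obtain ⟨hu_add, hadd_u⟩ := hα.2.2 u huα
  exact ⟨Or.inl ⟨α, trivial, u, rfl, hadd_u⟩, Or.inl ⟨u, rfl, α, trivial, hu_add⟩⟩
end

section
/- Let (W,+) be a commutative semigroup, A ⊆ W an ideal of (W,+), and e ∈ P(A). Then H(e) = W(e) \ ⋃_{f ∈ P(A)} (W(f) \ H(f)). -/
open Pointwise

/-! In a commutative semigroup `W(u) = W_L(u) = W_R(u)`, so `H(u)` consists of the generators of
the principal ideal `W(u)`. If `v ∈ H(e)` lies in `W(f)` with `f` primitive, then `e ∈ W(f)`, hence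
`e + f = e`, i.e. `e ≤_H f`, and primitivity of `f` forces `e = f`. -/

section AddSemigroup

variable {W : Type*} [AddSemigroup W]

lemma mem_WLset_self (u : W) : u ∈ WLset u := Or.inr rfl

lemma add_mem_WLset (w u : W) : w + u ∈ WLset u := Or.inl ⟨w, trivial, u, rfl, rfl⟩

lemma add_mem_WLset_of_mem {u v : W} (hv : v ∈ WLset u) (w : W) : w + v ∈ WLset u := by
  rcases hv with ⟨x, -, y, rfl, rfl⟩ | rfl
  · rw [← add_assoc]
    exact add_mem_WLset _ _
  · exact add_mem_WLset _ _

lemma WLset_subset_of_mem {u v : W} (hv : v ∈ WLset u) : WLset v ⊆ WLset u := by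
  rintro y (⟨x, -, z, rfl, rfl⟩ | rfl)
  · exact add_mem_WLset_of_mem hv x
  · exact hv

lemma add_eq_self_of_mem_WLset {f v : W} (hf : f ∈ Eset W) (hv : v ∈ WLset f) : v + f = v := by
  rcases hv with ⟨w, -, y, rfl, rfl⟩ | rfl
  · rw [add_assoc, hf]
  · exact hf

end AddSemigroup

section AddCommSemigroup

variable {W : Type*} [AddCommSemigroup W]

lemma WRset_eq_WLset (u : W) : WRset u = WLset u := by
  rw [WRset, WLset, add_comm ({u} : Set W)]

lemma WIset_eq_WLset (u : W) : WIset u = WLset u := by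
  refine Set.Subset.antisymm ?_ Set.subset_union_right
  rintro y (⟨x, hx, z, -, rfl⟩ | hy)
  · show x + z ∈ WLset u
    exact add_comm z x ▸ add_mem_WLset_of_mem hx z
  · exact hy

lemma mem_Hclass_iff {u v : W} : v ∈ Hclass u ↔ WLset u = WLset v := by
  simp only [Hclass, WRset_eq_WLset, Set.mem_ofPred_eq, and_self]

lemma eq_of_mem_WLset_of_mem_Pset {A : Set W} {e f : W} (he : e ∈ Eset W \ A)
    (hf : f ∈ Pset A) (hef : e ∈ WLset f) : e = f := by
  have hadd : e + f = e := add_eq_self_of_mem_WLset hf.1.1 hef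
  have hle : ReesLE e f := ⟨by rw [add_comm, hadd], hadd⟩
  exact (hf.2 e he.1 hle).resolve_right he.2

end AddCommSemigroup

theorem quasi_primitive_H_comm_general {W : Type*} [AddCommSemigroup W] (A : Set W)
    (e : W) (he : e ∈ Pset A) :
    Hclass e = WIset e \ ⋃ f ∈ Pset A, (WIset f \ Hclass f) := by
  ext v
  simp only [Set.mem_sdiff, Set.mem_iUnion, not_exists, not_and, not_not,
    WIset_eq_WLset, mem_Hclass_iff]
  constructor
  · intro hev
    refine ⟨hev ▸ mem_WLset_self v, fun f hf hvf => ?_⟩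
    have hef : e ∈ WLset f := (hev ▸ WLset_subset_of_mem hvf) (mem_WLset_self e)
    rwa [← eq_of_mem_WLset_of_mem_Pset he.1 hf hef]
  · rintro ⟨hv, hnot⟩
    exact hnot e he hv

theorem quasi_primitive_H_comm {W : Type*} [AddCommSemigroup W] (A : Set W)
    (hA : IsIdealSG A) (e : W) (he : e ∈ Pset A) :
    Hclass e = WIset e \ ⋃ f ∈ Pset A, (WIset f \ Hclass f) :=
  quasi_primitive_H_comm_general A e he
end

section
/- Let (W,+) be a semigroup. Then A(W) and A_s(W) are bottleneck ideals of (W,+): for every ideal D of (W,+) one has D ⊆ A(W) or A(W) ⊆ D, and likewise D ⊆ A_s(W) or A_s(W) ⊆ D. -/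
open Pointwise

/-!
If a subsemigroup `A` is fixed on both sides by every element outside it, then `A` is an ideal,
and it is a bottleneck: given an ideal `D` and `α ∈ A \ D`, any `d ∈ D \ A` would give
`α = d + α ∈ D`. For `A(W)` the elements outside are outside every `E^≤(α)` because `E^≤(α)`
lies in `A(W)`; for `A_s(W)` an element outside misses every `Ā_n`.
-/

section Bottleneck

variable {W : Type*} [AddSemigroup W] {A : Set W}

lemma isIdealSG_of_add_mem_of_absorbs (hadd : ∀ a ∈ A, ∀ b ∈ A, a + b ∈ A)
    (habs : ∀ a ∈ A, ∀ w ∉ A, w + a = a ∧ a + w = a) : IsIdealSG A := by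
  refine ⟨?_, ?_⟩
  · rintro _ ⟨x, -, y, hy, rfl⟩
    show x + y ∈ A
    by_cases hx : x ∈ A
    · exact hadd x hx y hy
    · rwa [(habs y hy x hx).1]
  · rintro _ ⟨y, hy, x, -, rfl⟩
    show y + x ∈ A
    by_cases hx : x ∈ A
    · exact hadd y hy x hx
    · rwa [(habs y hy x hx).2]

lemma isBottleneck_of_add_mem_of_absorbs (hadd : ∀ a ∈ A, ∀ b ∈ A, a + b ∈ A)
    (habs : ∀ a ∈ A, ∀ w ∉ A, w + a = a ∧ a + w = a) : IsBottleneck A := by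
  refine ⟨isIdealSG_of_add_mem_of_absorbs hadd habs, fun D hD => ?_⟩
  refine or_iff_not_imp_right.2 fun hAD d hd => ?_
  obtain ⟨α, hα, hαD⟩ := Set.not_subset.1 hAD
  by_contra hdA
  exact hαD ((habs α hα d hdA).1 ▸ hD.2 (Set.add_mem_add hd (Set.mem_univ α)))

end Bottleneck

section QuasiAbsorbing

variable {W : Type*} [AddSemigroup W]

lemma Ele_subset_Ele_s18 {α f : W} (hf : f ∈ Ele α) : Ele f ⊆ Ele α := by
  rintro g ⟨hgE, hfg, hgf⟩
  obtain ⟨-, hαf, hfα⟩ := hf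
  exact ⟨hgE, by rw [← hfg, ← add_assoc, hαf], by rw [← hgf, add_assoc, hfα]⟩

lemma Ele_subset_AW {α : W} (hα : α ∈ AW W) : Ele α ⊆ AW W := by
  obtain ⟨⟨-, hlin⟩, habs⟩ := hα
  intro f hf
  have hsub := Ele_subset_Ele_s18 hf
  have ⟨hfE, hαf, hfα⟩ := hf
  refine ⟨⟨hfE, fun g hg h hh => hlin g (hsub hg) h (hsub hh)⟩, fun w hw => ?_⟩
  by_cases hwα : w ∈ Ele α
  · exact (hlin w hwα f hf).resolve_left fun h => hw ⟨hwα.1, h⟩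
  · obtain ⟨hwα', hαw⟩ := habs w hwα
    exact ⟨by rw [← hαf, ← add_assoc, hwα'], by rw [← hfα, add_assoc, hαw]⟩

lemma add_mem_AW {α β : W} (hα : α ∈ AW W) (hβ : β ∈ AW W) : α + β ∈ AW W := by
  by_cases h : α ∈ Ele β
  · rwa [h.2.2]
  · rwa [(hβ.2 α h).1]

lemma AW_absorbs {α w : W} (hα : α ∈ AW W) (hw : w ∉ AW W) : w + α = α ∧ α + w = α :=
  hα.2 w fun h => hw (Ele_subset_AW hα h)

end QuasiAbsorbing

section StepwiseQuasiAbsorbing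

variable {W : Type*} [AddSemigroup W]

lemma Abar_absorbs (n : ℕ) {w α : W} (hw : w ∈ Abar W n) (hα : α ∉ Abar W n) :
    α + w = w ∧ w + α = w := by
  induction n with
  | zero => exact absurd hw (Set.notMem_empty w)
  | succ k ih =>
    have hαk : α ∉ Abar W k := fun h => hα (Or.inl h)
    rcases hw with hw | hw
    · exact ih hw hαk
    · exact hw.2 α hαk

lemma Abar_subset_As (n : ℕ) : Abar W n ⊆ As W := by
  induction n with
  | zero => exact Set.empty_subset _
  | succ k ih => rintro x (hx | hx); exacts [ih hx, ⟨k + 1, hx⟩]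

lemma exists_mem_Astep_succ {α : W} (hα : α ∈ As W) : ∃ k, α ∈ Astep W (k + 1) := by
  obtain ⟨_ | k, hk⟩ := hα
  · exact absurd hk (Set.notMem_empty α)
  · exact ⟨k, hk⟩

lemma add_mem_As (α : W) {β : W} (hβ : β ∈ As W) : α + β ∈ As W := by
  obtain ⟨k, hβk, hβabs⟩ := exists_mem_Astep_succ hβ
  by_cases hαk : α ∈ Abar W k
  · rw [(Abar_absorbs k hαk hβk).2]
    exact Abar_subset_As k hαk
  · rwa [(hβabs α hαk).1]

lemma As_absorbs {α w : W} (hα : α ∈ As W) (hw : w ∉ As W) : w + α = α ∧ α + w = α := by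
  obtain ⟨k, -, habs⟩ := exists_mem_Astep_succ hα
  exact habs w fun h => hw (Abar_subset_As k h)

end StepwiseQuasiAbsorbing

theorem AW_As_bottleneck {W : Type*} [AddSemigroup W] :
    IsBottleneck (AW W) ∧ IsBottleneck (As W) :=
  ⟨isBottleneck_of_add_mem_of_absorbs (fun _ ha _ hb => add_mem_AW ha hb)
      (fun _ ha _ hw => AW_absorbs ha hw),
    isBottleneck_of_add_mem_of_absorbs (fun a _ _ hb => add_mem_As a hb)
      (fun _ ha _ hw => As_absorbs ha hw)⟩
end
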